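/- arXiv:2302.03658 — 3 statements merged into one kernel-verified Lean document; each statement's English description precedes it below -/
import Mathlib

section
/- Let X ~ Binomial(k_R, 2k_R/n) (assume 2k_R ≤ n) and let λ > 0 and k_L ≥ 1. If λ ≤ (1/(2k_L))·log(1 + (n/k_R²)·(log 2)/2), then E[exp(2λ k_L X)] ≤ 2. -/
/-!
By the binomial theorem the moment generating function is `(1 + p (eᵗ - 1))^k`, and
`1 + x ≤ eˣ` bounds it by `exp (k p (eᵗ - 1))`. With `p = 2k_R/n` and `t = 2λk_L`, the condition
on `λ` says `eᵗ - 1 ≤ (n / k_R²) · log 2 / 2`, so the exponent is at most `log 2`.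
-/

open Finset

theorem binomial_mgf_eq_pow (k : ℕ) (p t : ℝ) :
    ∑ i ∈ range (k + 1), (k.choose i : ℝ) * p ^ i * (1 - p) ^ (k - i) * Real.exp (t * i) =
      (1 + p * (Real.exp t - 1)) ^ k := by
  rw [show 1 + p * (Real.exp t - 1) = p * Real.exp t + (1 - p) by ring, add_pow]
  refine sum_congr rfl fun i _ => ?_
  rw [mul_comm t, Real.exp_nat_mul, mul_pow]
  ring

theorem binomial_mgf_le_exp (k : ℕ) {p : ℝ} (hp₀ : 0 ≤ p) (hp₁ : p ≤ 1) (t : ℝ) :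
    ∑ i ∈ range (k + 1), (k.choose i : ℝ) * p ^ i * (1 - p) ^ (k - i) * Real.exp (t * i) ≤
      Real.exp (k * (p * (Real.exp t - 1))) := by
  have hbase : 0 ≤ 1 + p * (Real.exp t - 1) := by
    nlinarith [Real.exp_pos t]
  rw [binomial_mgf_eq_pow, Real.exp_nat_mul, add_comm]
  exact pow_le_pow_left₀ (by linarith) (Real.add_one_le_exp _) k

theorem binomial_mgf_le_two_general (n kR kL : ℕ) (hn : 0 < n) (hkR : 0 < kR) (hkL : 1 ≤ kL)
    (h2 : 2 * kR ≤ n) (lam : ℝ)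
    (hcond : lam ≤ (1 / (2 * (kL : ℝ))) *
      Real.log (1 + ((n : ℝ) / (kR : ℝ) ^ 2) * (Real.log 2 / 2))) :
    ∑ i ∈ Finset.range (kR + 1),
        (kR.choose i : ℝ) * ((2 * kR : ℝ) / n) ^ i * (1 - (2 * kR : ℝ) / n) ^ (kR - i) *
          Real.exp (2 * lam * kL * i) ≤ 2 := by
  set c : ℝ := (n / (kR : ℝ) ^ 2) * (Real.log 2 / 2)
  have hc : 0 ≤ c := by positivity
  have hp₁ : (2 * kR : ℝ) / n ≤ 1 := div_le_one_of_le₀ (by exact_mod_cast h2) n.cast_nonneg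
  have ht : 2 * lam * kL ≤ Real.log (1 + c) := by
    have hkL' : (0 : ℝ) < kL := by exact_mod_cast hkL
    calc 2 * lam * kL = 2 * kL * lam := by ring
      _ ≤ 2 * kL * ((1 / (2 * kL)) * Real.log (1 + c)) := by gcongr
      _ = Real.log (1 + c) := by field_simp
  have hexp : Real.exp (2 * lam * kL) - 1 ≤ c := by
    have := Real.exp_le_exp.mpr ht
    rw [Real.exp_log (by positivity)] at this
    linarith
  have hexponent : (kR : ℝ) * ((2 * kR / n) * c) = Real.log 2 := by
    have hn' : (n : ℝ) ≠ 0 := by exact_mod_cast hn.ne'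
    have hkR' : (kR : ℝ) ≠ 0 := by exact_mod_cast hkR.ne'
    simp only [c]
    field_simp
  calc _ ≤ Real.exp (kR * ((2 * kR / n) * (Real.exp (2 * lam * kL) - 1))) :=
        binomial_mgf_le_exp kR (by positivity) hp₁ _
    _ ≤ Real.exp (Real.log 2) := by rw [← hexponent]; gcongr
    _ = 2 := Real.exp_log two_pos

/-- If `X ~ Binomial(k_R, 2k_R/n)` with `2k_R ≤ n`, `λ > 0`, `k_L ≥ 1`, and
`λ ≤ (1/(2k_L))·log(1 + (n/k_R²)·(log 2)/2)`, then `E[exp(2λ k_L X)] ≤ 2`. -/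
theorem binomial_mgf_le_two (n kR kL : ℕ) (hn : 0 < n) (hkR : 0 < kR) (hkL : 1 ≤ kL)
    (h2 : 2 * kR ≤ n) (lam : ℝ) (hlam : 0 < lam)
    (hcond : lam ≤ (1 / (2 * (kL : ℝ))) *
      Real.log (1 + ((n : ℝ) / (kR : ℝ) ^ 2) * (Real.log 2 / 2))) :
    ∑ i ∈ Finset.range (kR + 1),
        (kR.choose i : ℝ) * ((2 * kR : ℝ) / n) ^ i * (1 - (2 * kR : ℝ) / n) ^ (kR - i) *
          Real.exp (2 * lam * kL * i) ≤ 2 :=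
  binomial_mgf_le_two_general n kR kL hn hkR hkL h2 lam hcond
end

section
/- If H ~ Hypergeometric(n, K, K) (number of successes drawing K from a population of n with K successes) and K ≤ n/2, then H is stochastically dominated by Binomial(K, 2K/n). -/
/-!
The likelihood ratio of `Hypergeometric(n, K, K)` against `Binomial(K, p)`, `p = 2K/n`, is
nonincreasing: the ratio of consecutive masses is `C(n-K, K-i-1) / C(n-K, K-i)` for the former
and `p / (1-p)` for the latter, after the common factor `C(K, i+1) / C(K, i)` cancels. Hence the
binomial mass, once it reaches the hypergeometric one, stays above it; since both masses sum
to one, this single crossing gives domination of every upper tail.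
-/

open Finset

noncomputable def hypergeometricMass (n K i : ℕ) : ℝ :=
  (K.choose i * (n - K).choose (K - i) : ℝ) / n.choose K

noncomputable def binomialMass (K : ℕ) (p : ℝ) (i : ℕ) : ℝ :=
  K.choose i * p ^ i * (1 - p) ^ (K - i)

section SingleCrossing

variable {f g : ℕ → ℝ}

theorem le_succ_of_le_of_mul_le_mul {i : ℕ} (hfi : 0 < f i) (hg : 0 ≤ g (i + 1))
    (hratio : f (i + 1) * g i ≤ g (i + 1) * f i) (hle : f i ≤ g i) :
    f (i + 1) ≤ g (i + 1) :=
  le_of_mul_le_mul_right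
    (hratio.trans (mul_le_mul_of_nonneg_left hle hg)) (hfi.trans_le hle)

theorem le_of_le_of_forall_mul_le_mul {N : ℕ} (hf : ∀ k < N, 0 < f k) (hg : ∀ k, 0 ≤ g k)
    (hratio : ∀ k, k + 1 < N → f (k + 1) * g k ≤ g (k + 1) * f k)
    {i j : ℕ} (hij : i ≤ j) (hj : j < N) (hle : f i ≤ g i) : f j ≤ g j := by
  induction j, hij using Nat.le_induction with
  | base => exact hle
  | succ j _ ih =>
    exact le_succ_of_le_of_mul_le_mul (hf j (by omega)) (hg _) (hratio j hj) (ih (by omega))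

theorem sum_Ico_le_sum_Ico_of_single_crossing {N : ℕ}
    (hsum : ∑ i ∈ range N, f i = ∑ i ∈ range N, g i)
    (hcross : ∀ i j, i ≤ j → j < N → f i ≤ g i → f j ≤ g j) (t : ℕ) :
    ∑ i ∈ Ico t N, f i ≤ ∑ i ∈ Ico t N, g i := by
  by_cases hcrossed : ∃ i < t, f i ≤ g i
  · obtain ⟨i, hit, hle⟩ := hcrossed
    refine sum_le_sum fun j hj => ?_
    rw [mem_Ico] at hj
    exact hcross i j (by omega) hj.2 hle
  obtain htN | hNt := le_total t N
  · push Not at hcrossed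
    have hhead : ∑ i ∈ range t, g i ≤ ∑ i ∈ range t, f i :=
      sum_le_sum fun i hi => (hcrossed i (mem_range.mp hi)).le
    rw [← sum_range_add_sum_Ico _ htN, ← sum_range_add_sum_Ico _ htN] at hsum
    linarith
  · simp [Ico_eq_empty_of_le hNt]

end SingleCrossing

theorem sum_range_binomialMass (K : ℕ) (p : ℝ) :
    ∑ i ∈ range (K + 1), binomialMass K p i = 1 := by
  have := add_pow p (1 - p) K
  rw [add_sub_cancel, one_pow] at this
  rw [this]
  exact sum_congr rfl fun i _ => by unfold binomialMass; ring

theorem binomialMass_nonneg (K : ℕ) {p : ℝ} (hp0 : 0 ≤ p) (hp1 : p ≤ 1) (i : ℕ) :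
    0 ≤ binomialMass K p i := by
  have : 0 ≤ 1 - p := sub_nonneg.mpr hp1
  unfold binomialMass
  positivity

theorem sum_range_hypergeometricMass {n K : ℕ} (hKn : K ≤ n) :
    ∑ i ∈ range (K + 1), hypergeometricMass n K i = 1 := by
  have hvandermonde :
      ∑ i ∈ range (K + 1), K.choose i * (n - K).choose (K - i) = n.choose K := by
    have := Nat.add_choose_eq K (n - K) K
    rw [Nat.add_sub_cancel' hKn] at this
    rw [this, Nat.sum_antidiagonal_eq_sum_range_succ_mk]
  have hpos : (0 : ℝ) < n.choose K := by exact_mod_cast Nat.choose_pos hKn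
  unfold hypergeometricMass
  rw [← sum_div, div_eq_one_iff_eq hpos.ne']
  exact_mod_cast hvandermonde

theorem hypergeometricMass_pos {n K i : ℕ} (h : 2 * K ≤ n) (hi : i ≤ K) :
    0 < hypergeometricMass n K i := by
  have := Nat.choose_pos hi
  have := Nat.choose_pos (show K - i ≤ n - K by omega)
  have := Nat.choose_pos (show K ≤ n by omega)
  unfold hypergeometricMass
  positivity

theorem choose_mul_sub_le_mul_choose_succ {m K b : ℕ} (hb : b < K) (hK : K ≤ m) :
    m.choose b * (m - K) ≤ K * m.choose (b + 1) := by
  have hfactor : (m - K) * (b + 1) ≤ K * (m - b) :=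
    calc (m - K) * (b + 1) ≤ (m - b) * K := Nat.mul_le_mul (by omega) (by omega)
      _ = K * (m - b) := Nat.mul_comm _ _
  refine Nat.le_of_mul_le_mul_right ?_ (Nat.succ_pos b)
  calc m.choose b * (m - K) * (b + 1) = m.choose b * ((m - K) * (b + 1)) := by ring
    _ ≤ m.choose b * (K * (m - b)) := Nat.mul_le_mul_left _ hfactor
    _ = K * (m.choose b * (m - b)) := by ring
    _ = K * m.choose (b + 1) * (b + 1) := by rw [← Nat.choose_succ_right_eq]; ring

theorem choose_mul_one_sub_le {n K b : ℕ} (h : 2 * K ≤ n) (hb : b < K) :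
    ((n - K).choose b : ℝ) * (1 - 2 * K / n) ≤ 2 * K / n * (n - K).choose (b + 1) := by
  have hn : (0 : ℝ) < n := by exact_mod_cast (show 0 < n by omega)
  have hq : (1 : ℝ) - 2 * K / n = ((n - K - K : ℕ) : ℝ) / n := by
    rw [Nat.cast_sub (by omega), Nat.cast_sub (by omega)]
    field_simp
    ring
  have hchoose := choose_mul_sub_le_mul_choose_succ (m := n - K) hb (show K ≤ n - K by omega)
  rw [hq, ← mul_div_assoc, div_mul_eq_mul_div, div_le_div_iff_of_pos_right hn]
  calc ((n - K).choose b : ℝ) * ((n - K - K : ℕ) : ℝ)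
      ≤ K * (n - K).choose (b + 1) := by exact_mod_cast hchoose
    _ ≤ 2 * K * (n - K).choose (b + 1) := by gcongr; linarith

theorem two_mul_div_le_one {n K : ℕ} (h : 2 * K ≤ n) : (2 * K : ℝ) / n ≤ 1 :=
  div_le_one_of_le₀ (by exact_mod_cast h) (Nat.cast_nonneg n)

theorem hypergeometricMass_succ_mul_binomialMass_le {n K i : ℕ} (h : 2 * K ≤ n) (hi : i < K) :
    hypergeometricMass n K (i + 1) * binomialMass K (2 * K / n) i
      ≤ binomialMass K (2 * K / n) (i + 1) * hypergeometricMass n K i := by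
  have hq : (0 : ℝ) ≤ 1 - 2 * K / n := sub_nonneg.mpr (two_mul_div_le_one h)
  unfold hypergeometricMass binomialMass
  rw [show K - i = K - (i + 1) + 1 by omega, pow_succ, pow_succ]
  set p : ℝ := 2 * K / n
  calc (K.choose (i + 1) * (n - K).choose (K - (i + 1)) : ℝ) / n.choose K
          * (K.choose i * p ^ i * ((1 - p) ^ (K - (i + 1)) * (1 - p)))
        = K.choose (i + 1) * K.choose i / n.choose K * p ^ i * (1 - p) ^ (K - (i + 1))
          * ((n - K).choose (K - (i + 1)) * (1 - p)) := by ring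
    _ ≤ K.choose (i + 1) * K.choose i / n.choose K * p ^ i * (1 - p) ^ (K - (i + 1))
          * (p * (n - K).choose (K - (i + 1) + 1)) :=
        mul_le_mul_of_nonneg_left (choose_mul_one_sub_le h (by omega)) (by positivity)
    _ = K.choose (i + 1) * (p ^ i * p) * (1 - p) ^ (K - (i + 1))
          * ((K.choose i * (n - K).choose (K - (i + 1) + 1) : ℝ) / n.choose K) := by ring

theorem hypergeometric_stochDom_binomial_general (n K : ℕ) (h : 2 * K ≤ n) :
    ∀ t : ℕ,
      (∑ i ∈ Finset.Icc t K,
          ((K.choose i : ℝ) * ((n - K).choose (K - i) : ℝ)) / (n.choose K : ℝ))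
        ≤ ∑ i ∈ Finset.Icc t K,
            (K.choose i : ℝ) * ((2 * K : ℝ) / n) ^ i * (1 - (2 * K : ℝ) / n) ^ (K - i) := by
  intro t
  have hcross (i j : ℕ) (hij : i ≤ j) (hj : j < K + 1)
      (hle : hypergeometricMass n K i ≤ binomialMass K (2 * K / n) i) :
      hypergeometricMass n K j ≤ binomialMass K (2 * K / n) j :=
    le_of_le_of_forall_mul_le_mul (f := hypergeometricMass n K)
      (fun k hk => hypergeometricMass_pos h (by omega))
      (binomialMass_nonneg K (by positivity) (two_mul_div_le_one h))
      (fun k hk => hypergeometricMass_succ_mul_binomialMass_le h (by omega)) hij hj hle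
  rw [← Ico_add_one_right_eq_Icc]
  exact sum_Ico_le_sum_Ico_of_single_crossing
    (by rw [sum_range_hypergeometricMass (by omega), sum_range_binomialMass]) hcross t

/-- If `H ~ Hypergeometric(n, K, K)` and `K ≤ n/2`, then `H` is stochastically
dominated by `Binomial(K, 2K/n)`: for every `t`, `P(H ≥ t) ≤ P(B ≥ t)`. -/
theorem hypergeometric_stochDom_binomial (n K : ℕ) (hK : 0 < K) (h : 2 * K ≤ n) :
    ∀ t : ℕ,
      (∑ i ∈ Finset.Icc t K,
          ((K.choose i : ℝ) * ((n - K).choose (K - i) : ℝ)) / (n.choose K : ℝ))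
        ≤ ∑ i ∈ Finset.Icc t K,
            (K.choose i : ℝ) * ((2 * K : ℝ) / n) ^ i * (1 - (2 * K : ℝ) / n) ^ (K - i) :=
  hypergeometric_stochDom_binomial_general n K h
end

section
/- Let λ > 0, and let B ~ Binomial(k_R, 2k_R/n) and B' ~ Binomial(k_L, 2k_L/n) be independent, with 2λ·k_L ≤ 1 and 2k_R, 2k_L ≤ n. Then E[exp(2λ B B')] ≤ [1 + (2k_L/n)·(exp(8 (k_R²/n) λ) − 1)]^{k_L}. -/
open Finset Real

/-!
Conditioning on `B' = j`, the inner expectation is the binomial moment generating function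
`(1 + p (e^{2λj} - 1))^{k_R}` with `p = 2k_R/n`. Since `0 ≤ 2λj ≤ 1`, we have
`e^{2λj} - 1 ≤ 2λj + (2λj)² ≤ 4λj`, and `1 + x ≤ e^x` turns this into `exp(8 (k_R²/n) λ)^j`.
What remains is the moment generating function of `B'` evaluated at `exp(8 (k_R²/n) λ)`.
-/

lemma Real.exp_sub_one_le_add_sq {x : ℝ} (hx : |x| ≤ 1) : exp x - 1 ≤ x + x ^ 2 := by
  linarith [le_abs_self (exp x - 1 - x), abs_exp_sub_one_sub_id_le hx]

lemma one_add_mul_exp_sub_one_pow_le (m : ℕ) {p y : ℝ} (hp : 0 ≤ p) (hy0 : 0 ≤ y)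
    (hy1 : y ≤ 1) : (1 + p * (exp y - 1)) ^ m ≤ exp (2 * m * p * y) := by
  have hexp : exp y - 1 ≤ 2 * y := by
    nlinarith [exp_sub_one_le_add_sq (abs_le.mpr ⟨by linarith, hy1⟩)]
  have hbase : 0 ≤ 1 + p * (exp y - 1) := by nlinarith [one_le_exp hy0]
  calc (1 + p * (exp y - 1)) ^ m ≤ exp (p * (2 * y)) ^ m := by
        gcongr
        linarith [add_one_le_exp (p * (2 * y)), mul_le_mul_of_nonneg_left hexp hp]
    _ = exp (2 * m * p * y) := by rw [← exp_nat_mul]; ring_nf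

def binomialWeight (m : ℕ) (p : ℝ) (i : ℕ) : ℝ :=
  m.choose i * p ^ i * (1 - p) ^ (m - i)

lemma binomialWeight_nonneg {m : ℕ} {p : ℝ} (hp0 : 0 ≤ p) (hp1 : p ≤ 1) (i : ℕ) :
    0 ≤ binomialWeight m p i := by
  have : 0 ≤ 1 - p := by linarith
  unfold binomialWeight
  positivity

lemma sum_binomialWeight_mul_pow (m : ℕ) (p x : ℝ) :
    ∑ i ∈ range (m + 1), binomialWeight m p i * x ^ i = (1 + p * (x - 1)) ^ m := by
  rw [show 1 + p * (x - 1) = p * x + (1 - p) by ring, add_pow]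
  refine sum_congr rfl fun i _ => ?_
  rw [binomialWeight, mul_pow]
  ring

lemma sum_sum_binomialWeight_mul_exp_mul (m : ℕ) (p t : ℝ) (s : Finset ℕ) (v : ℕ → ℝ) :
    ∑ i ∈ range (m + 1), ∑ j ∈ s, binomialWeight m p i * v j * exp (t * i * j)
      = ∑ j ∈ s, v j * (1 + p * (exp (t * j) - 1)) ^ m := by
  rw [sum_comm]
  refine sum_congr rfl fun j _ => ?_
  rw [← sum_binomialWeight_mul_pow, mul_sum]
  refine sum_congr rfl fun i _ => ?_
  rw [← exp_nat_mul]
  ring_nf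

theorem binomial_product_mgf_bound_general (n kR kL : ℕ)
    (hL : 2 * kL ≤ n) (lam : ℝ) (hlam : 0 < lam)
    (hsmall : 2 * lam * kL ≤ 1) :
    ∑ i ∈ Finset.range (kR + 1), ∑ j ∈ Finset.range (kL + 1),
        ((kR.choose i : ℝ) * ((2 * kR : ℝ) / n) ^ i * (1 - (2 * kR : ℝ) / n) ^ (kR - i)) *
        ((kL.choose j : ℝ) * ((2 * kL : ℝ) / n) ^ j * (1 - (2 * kL : ℝ) / n) ^ (kL - j)) *
          Real.exp (2 * lam * i * j)
      ≤ (1 + ((2 * kL : ℝ) / n) * (Real.exp (8 * ((kR : ℝ) ^ 2 / n) * lam) - 1)) ^ kL := by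
  set p : ℝ := 2 * kR / n with hp
  set q : ℝ := 2 * kL / n
  have hq1 : q ≤ 1 := div_le_one_of_le₀ (by exact_mod_cast hL) n.cast_nonneg
  change ∑ i ∈ range (kR + 1), ∑ j ∈ range (kL + 1),
    binomialWeight kR p i * binomialWeight kL q j * exp (2 * lam * i * j) ≤ _
  rw [sum_sum_binomialWeight_mul_exp_mul, ← sum_binomialWeight_mul_pow]
  gcongr with j hj
  · exact binomialWeight_nonneg (by positivity) hq1 j
  · have hj : (j : ℝ) ≤ kL := by exact_mod_cast Nat.lt_succ_iff.mp (mem_range.mp hj)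
    calc _ ≤ exp (2 * kR * p * (2 * lam * j)) :=
          one_add_mul_exp_sub_one_pow_le kR (by positivity) (by positivity) (by nlinarith)
      _ = _ := by rw [← exp_nat_mul, hp]; ring_nf

/-- For independent `B ~ Binomial(k_R, 2k_R/n)` and `B' ~ Binomial(k_L, 2k_L/n)`
with `2λk_L ≤ 1` and `2k_R, 2k_L ≤ n`:
`E[exp(2λBB')] ≤ (1 + (2k_L/n)(exp(8(k_R²/n)λ) − 1))^{k_L}`. -/
theorem binomial_product_mgf_bound (n kR kL : ℕ) (hkR : 0 < kR) (hkL : 0 < kL)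
    (hR : 2 * kR ≤ n) (hL : 2 * kL ≤ n) (lam : ℝ) (hlam : 0 < lam)
    (hsmall : 2 * lam * kL ≤ 1) :
    ∑ i ∈ Finset.range (kR + 1), ∑ j ∈ Finset.range (kL + 1),
        ((kR.choose i : ℝ) * ((2 * kR : ℝ) / n) ^ i * (1 - (2 * kR : ℝ) / n) ^ (kR - i)) *
        ((kL.choose j : ℝ) * ((2 * kL : ℝ) / n) ^ j * (1 - (2 * kL : ℝ) / n) ^ (kL - j)) *
          Real.exp (2 * lam * i * j)
      ≤ (1 + ((2 * kL : ℝ) / n) * (Real.exp (8 * ((kR : ℝ) ^ 2 / n) * lam) - 1)) ^ kL :=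
  binomial_product_mgf_bound_general n kR kL hL lam hlam hsmall
end
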